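/- For m ∈ ℤ_{>0} and 0 ≤ r < 2m with r ∉ {0, m}, the radial limit lim_{t→0⁺} θ̃¹_{m,r}(it) = lim_{t→0⁺} ∑_{k ≡ r mod 2m} sgn(k)·e^{−2πt·k²/(4m)} of the false theta function exists and is finite. -/

import Mathlib

open Complex Real Filter Topology

/-- The false theta function `θ̃¹_{m,r}`. -/
noncomputable def falseTheta (m r : ℤ) (τ : ℂ) : ℂ :=
  ∑' k : ℤ, if k % (2 * m) = r % (2 * m) then
    (k.sign : ℂ) * Complex.exp (2 * (π : ℂ) * I * τ * ((k : ℂ) ^ 2 / (4 * (m : ℂ))))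
  else 0

set_option maxHeartbeats 1000000


lemma exp_quad_lower (x : ℝ) (hx : 0 ≤ x) : 1 + x + x^2/4 ≤ Real.exp x := by
  have h := Real.add_one_le_exp (x/2)
  have h2 : Real.exp x = Real.exp (x/2) * Real.exp (x/2) := by
    rw [← Real.exp_add]; ring_nf
  nlinarith [Real.exp_nonneg (x/2)]

lemma exp_neg_upper (x : ℝ) (hx : 0 ≤ x) : Real.exp (-x) ≤ 1 - x + (3/4)*x^2 := by
  have h1 := exp_quad_lower x hx
  have h3 : (0:ℝ) < 1 + x + x^2/4 := by nlinarith
  have h4 : (Real.exp x)⁻¹ ≤ (1 + x + x^2/4)⁻¹ := by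
    exact inv_anti₀ h3 h1
  have h5 : (1 + x + x^2/4)⁻¹ ≤ 1 - x + (3/4)*x^2 := by
    rw [inv_eq_one_div, div_le_iff₀ h3]; nlinarith
  rw [Real.exp_neg]; linarith

lemma exp_neg_lower (x : ℝ) : 1 - x ≤ Real.exp (-x) := by
  have := Real.add_one_le_exp (-x); linarith

lemma exp_lip (x y : ℝ) (hx : 0 ≤ x) (hxy : x ≤ y) :
    Real.exp (-x) - Real.exp (-y) ≤ y - x := by
  have h1 : Real.exp (-y) = Real.exp (-x) * Real.exp (-(y-x)) := by
    rw [← Real.exp_add]; ring_nf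
  have h2 : 1 - (y-x) ≤ Real.exp (-(y-x)) := exp_neg_lower _
  have h3 : Real.exp (-x) ≤ 1 := Real.exp_le_one_iff.mpr (by linarith)
  have h4 : 0 ≤ Real.exp (-x) := Real.exp_nonneg _
  nlinarith

lemma s_exp_neg_le_one (s : ℝ) : s * Real.exp (-s) ≤ 1 := by
  have h1 := Real.add_one_le_exp s
  have h2 : Real.exp s * Real.exp (-s) = 1 := by rw [← Real.exp_add]; simp
  nlinarith [mul_le_mul_of_nonneg_right h1 (Real.exp_nonneg (-s)), Real.exp_nonneg (-s)]

lemma sq_exp_neg_le_four (s : ℝ) (hs : 0 ≤ s) : s^2 * Real.exp (-s) ≤ 4 := by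
  have h1 := exp_quad_lower s hs
  have h2 : Real.exp s * Real.exp (-s) = 1 := by rw [← Real.exp_add]; simp
  nlinarith [mul_le_mul_of_nonneg_right h1 (Real.exp_nonneg (-s)), Real.exp_nonneg (-s),
    mul_nonneg hs (Real.exp_nonneg (-s))]

lemma exp_decay1 (α lam : ℝ) (h : 0 ≤ α) (hl : 0 < lam) :
    α * Real.exp (-(α*lam)) ≤ 1/lam := by
  rw [le_div_iff₀ hl]
  nlinarith [s_exp_neg_le_one (α*lam)]

lemma exp_decay2 (α lam : ℝ) (h : 0 ≤ α) (hl : 0 < lam) :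
    α^2 * Real.exp (-(α*lam)) ≤ 4/lam^2 := by
  rw [le_div_iff₀ (by positivity : (0:ℝ) < lam^2)]
  nlinarith [sq_exp_neg_le_four (α*lam) (by positivity), Real.exp_nonneg (-(α*lam))]

lemma delta_bound (d s w : ℝ) (hd0 : 0 ≤ d) (hd1 : d ≤ 1) (hw : 0 ≤ w) (hs0 : 0 ≤ s)
    (hsw : s ≤ d*w) :
    |(1 - Real.exp (-s)) - d*(1 - Real.exp (-w))| ≤ (d*w - s) + w^2 := by
  have hdw : 0 ≤ d*w := le_trans hs0 hsw
  have h1 : Real.exp (-(d*w)) ≤ 1 - d*w + (3/4)*(d*w)^2 := exp_neg_upper _ hdw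
  have h2 : 1 - d*w ≤ Real.exp (-(d*w)) := exp_neg_lower _
  have h3 : Real.exp (-w) ≤ 1 - w + (3/4)*w^2 := exp_neg_upper _ hw
  have h4 : 1 - w ≤ Real.exp (-w) := exp_neg_lower _
  have h5 : Real.exp (-s) - Real.exp (-(d*w)) ≤ d*w - s := exp_lip s (d*w) hs0 hsw
  have h6 : Real.exp (-(d*w)) ≤ Real.exp (-s) := by
    apply Real.exp_le_exp.mpr; linarith
  rw [abs_le]
  constructor
  · nlinarith [mul_le_mul_of_nonneg_left h3 hd0, mul_le_mul_of_nonneg_left h4 hd0, sq_nonneg w,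
      sq_nonneg (d*w), mul_le_mul_of_nonneg_left hd1 hd0, sq_nonneg (w*(1-d))]
  · nlinarith [mul_le_mul_of_nonneg_left h3 hd0, mul_le_mul_of_nonneg_left h4 hd0, sq_nonneg w,
      sq_nonneg (d*w), mul_le_mul_of_nonneg_left hd1 hd0, sq_nonneg (w*(1-d))]

lemma summable_exp_neg_mul (c : ℝ) (hc : 0 < c) (A : ℕ → ℝ) (hA : ∀ n : ℕ, (n:ℝ) ≤ A n) :
    Summable (fun n => Real.exp (-(c * A n))) := by
  refine Summable.of_nonneg_of_le (fun n => Real.exp_nonneg _) (fun n => ?_)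
    (summable_geometric_of_lt_one (Real.exp_nonneg (-c))
      (Real.exp_lt_one_iff.mpr (by linarith)))
  rw [← Real.exp_nat_mul]
  apply Real.exp_le_exp.mpr
  have := hA n
  nlinarith



lemma exp_eq (m' t x : ℝ) (hm' : m' ≠ 0) :
    Complex.exp (2*(π:ℂ)*I*((t:ℂ)*I)*(((x:ℝ):ℂ)^2/(4*(m':ℂ))))
      = ((Real.exp (-(π*t/(2*m')*x^2)) : ℝ) : ℂ) := by
  rw [Complex.ofReal_exp]
  congr 1
  have h1 : 2*(π:ℂ)*I*((t:ℂ)*I)*(((x:ℝ):ℂ)^2/(4*(m':ℂ)))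
      = (2*(π:ℂ)*(t:ℂ)*(((x:ℝ):ℂ)^2/(4*(m':ℂ))))*(I*I) := by ring
  rw [h1, Complex.I_mul_I]
  have hm'' : (m':ℂ) ≠ 0 := by exact_mod_cast hm'
  push_cast
  field_simp
  ring

lemma falseTheta_repr (m r : ℤ) (hm : 0 < m) (h0 : 0 < r) (hr2m : r < 2*m) (t : ℝ) (ht : 0 < t) :
    falseTheta m r ((t:ℂ) * I) =
      Complex.ofReal (∑' n : ℕ, (Real.exp (-(π*t/(2*(m:ℝ)) * (2*(m:ℝ)*n + r)^2))
        - Real.exp (-(π*t/(2*(m:ℝ)) * (2*(m:ℝ)*n + (2*(m:ℝ) - r))^2)))) := by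
  have hmR : (1:ℝ) ≤ (m:ℝ) := by exact_mod_cast hm
  have hrR : (1:ℝ) ≤ (r:ℝ) := by exact_mod_cast h0
  have hr2mR : (1:ℝ) ≤ 2*(m:ℝ) - r := by
    have h1 : r + 1 ≤ 2*m := by omega
    have h2 : ((r:ℝ)) + 1 ≤ 2*(m:ℝ) := by exact_mod_cast h1
    linarith
  have hmne : (m:ℝ) ≠ 0 := by linarith
  set c : ℝ := π*t/(2*(m:ℝ)) with hc_def
  have hc : 0 < c := by
    apply div_pos (mul_pos Real.pi_pos ht); linarith
  set p : ℕ → ℝ := fun n => Real.exp (-(c * (2*(m:ℝ)*n + r)^2)) with hp_def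
  set q : ℕ → ℝ := fun n => Real.exp (-(c * (2*(m:ℝ)*n + (2*(m:ℝ) - r))^2)) with hq_def
  have hbase : ∀ (b : ℝ), 1 ≤ b → ∀ n : ℕ, (n:ℝ) ≤ (2*(m:ℝ)*n + b)^2 := by
    intro b hb n
    have hn : (0:ℝ) ≤ n := Nat.cast_nonneg n
    have h1 : (0:ℝ) ≤ ((m:ℝ)-1)*n := mul_nonneg (by linarith) hn
    have h2 : (n:ℝ)+1 ≤ 2*(m:ℝ)*n + b := by nlinarith
    have h3 := pow_le_pow_left₀ (by positivity : (0:ℝ) ≤ (n:ℝ)+1) h2 2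
    nlinarith [sq_nonneg ((n:ℝ))]
  have hp : Summable p := summable_exp_neg_mul c hc _ (hbase _ hrR)
  have hq : Summable q := summable_exp_neg_mul c hc _ (hbase _ hr2mR)
  have hps : HasSum (fun n : ℕ => ((p n : ℝ) : ℂ)) ((∑' n, p n : ℝ) : ℂ) :=
    Complex.hasSum_ofReal.mpr hp.hasSum
  have hqs : HasSum (fun n : ℕ => -((q n : ℝ) : ℂ)) (-((∑' n, q n : ℝ) : ℂ)) :=
    (Complex.hasSum_ofReal.mpr hq.hasSum).neg
  have hint := hps.int_rec hqs
  have hcomp : ∀ n : ℤ,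
      ((fun k : ℤ => if k % (2 * m) = r % (2 * m) then
        (k.sign : ℂ) * Complex.exp (2 * (π : ℂ) * I * ((t:ℂ)*I) * ((k : ℂ) ^ 2 / (4 * (m : ℂ))))
      else 0) ∘ (fun n : ℤ => 2*m*n + r)) n
      = (Int.rec (fun n => ((p n:ℝ):ℂ)) (fun n => -((q n:ℝ):ℂ)) n : ℂ) := by
    intro n
    cases n with
    | ofNat k =>
      show (if (2*m*(k:ℤ) + r) % (2 * m) = r % (2 * m) then
        ((2*m*(k:ℤ) + r).sign : ℂ) * Complex.exp (2 * (π : ℂ) * I * ((t:ℂ)*I) *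
          (((2*m*(k:ℤ) + r : ℤ) : ℂ) ^ 2 / (4 * (m : ℂ)))) else 0) = ((p k : ℝ) : ℂ)
      have hcond : (2*m*(k:ℤ) + r) % (2*m) = r % (2*m) := by
        exact Int.modEq_iff_dvd.mpr ⟨-k, by ring⟩
      rw [if_pos hcond]
      have hpos : (0:ℤ) < 2*m*(k:ℤ) + r := by
        have h1 : (0:ℤ) ≤ 2*m*(k:ℤ) := by positivity
        linarith
      rw [Int.sign_eq_one_iff_pos.mpr hpos]
      have hx : ((2*m*(k:ℤ) + r : ℤ) : ℂ) = (((2*(m:ℝ)*k + r : ℝ)) : ℂ) := by push_cast; ring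
      have hmc : ((m:ℤ):ℂ) = (((m:ℝ)):ℂ) := by push_cast; ring
      rw [hx, hmc, exp_eq (m:ℝ) t _ hmne]
      simp only [Int.cast_one, one_mul, hp_def, hc_def]
    | negSucc k =>
      show (if (2*m*(Int.negSucc k) + r) % (2 * m) = r % (2 * m) then
        ((2*m*(Int.negSucc k) + r).sign : ℂ) * Complex.exp (2 * (π : ℂ) * I * ((t:ℂ)*I) *
          (((2*m*(Int.negSucc k) + r : ℤ) : ℂ) ^ 2 / (4 * (m : ℂ)))) else 0) = -((q k : ℝ) : ℂ)
      have hns : (Int.negSucc k : ℤ) = -((k:ℤ)+1) := Int.negSucc_eq k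
      rw [hns]
      have hcond : (2*m*(-((k:ℤ)+1)) + r) % (2*m) = r % (2*m) := by
        exact Int.modEq_iff_dvd.mpr ⟨(k:ℤ)+1, by ring⟩
      rw [if_pos hcond]
      have hneg : 2*m*(-((k:ℤ)+1)) + r < 0 := by
        have h1 : (2:ℤ)*m ≤ 2*m*((k:ℤ)+1) := by nlinarith [Int.ofNat_nonneg k]
        linarith
      rw [Int.sign_eq_neg_one_iff_neg.mpr hneg]
      have hx : ((2*m*(-((k:ℤ)+1)) + r : ℤ) : ℂ) = (((-(2*(m:ℝ)*k + (2*(m:ℝ) - r)) : ℝ)) : ℂ) := by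
        push_cast; ring
      have hmc : ((m:ℤ):ℂ) = (((m:ℝ)):ℂ) := by push_cast; ring
      rw [hx, hmc, exp_eq (m:ℝ) t _ hmne]
      have hsq : (-(2*(m:ℝ)*k + (2*(m:ℝ) - r)))^2 = (2*(m:ℝ)*k + (2*(m:ℝ) - r))^2 := by ring
      rw [hsq]
      simp only [Int.cast_neg, Int.cast_one, neg_one_mul, hq_def, hc_def]
  have he : Function.Injective (fun n : ℤ => 2*m*n + r) := by
    intro a b hab
    simp only at hab
    have h2m : (2*m : ℤ) ≠ 0 := by omega
    have := add_right_cancel hab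
    exact mul_left_cancel₀ h2m this
  have hsupp : ∀ k : ℤ, k ∉ Set.range (fun n : ℤ => 2*m*n + r) →
      (if k % (2 * m) = r % (2 * m) then
        (k.sign : ℂ) * Complex.exp (2 * (π : ℂ) * I * ((t:ℂ)*I) * ((k : ℂ) ^ 2 / (4 * (m : ℂ))))
      else 0) = 0 := by
    intro k hk
    apply if_neg
    intro hcon
    apply hk
    obtain ⟨c', hc'⟩ := Int.modEq_iff_dvd.mp (hcon : Int.ModEq (2*m) k r)
    exact ⟨-c', by show 2*m*(-c') + r = k; linear_combination hc'⟩
  have hkey := (he.hasSum_iff hsupp).mp ((hint.congr_fun (fun n => (hcomp n))))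
  have hval : ((∑' n, p n : ℝ) : ℂ) + -((∑' n, q n : ℝ) : ℂ)
      = Complex.ofReal (∑' n : ℕ, (p n - q n)) := by
    rw [hp.tsum_sub hq]
    push_cast
    ring
  rw [hval] at hkey
  have hfin := hkey.tsum_eq
  simp only [hp_def, hq_def] at hfin
  simpa only [falseTheta] using hfin


noncomputable def Gfun (m r : ℤ) (t : ℝ) (n : ℕ) : ℝ :=
  (Real.exp (-(π*t/(2*(m:ℝ)) * (2*(m:ℝ)*n + r)^2))
   - Real.exp (-(π*t/(2*(m:ℝ)) * (2*(m:ℝ)*n + (2*(m:ℝ) - r))^2)))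
  - (1 - (r:ℝ)/(m:ℝ)) * (Real.exp (-(π*t/(2*(m:ℝ)) * (2*(m:ℝ)*n + r)^2))
   - Real.exp (-(π*t/(2*(m:ℝ)) * (2*(m:ℝ)*((n+1:ℕ):ℝ) + r)^2)))

lemma G_cont (m r : ℤ) (n : ℕ) : Continuous (fun t => Gfun m r t n) := by
  unfold Gfun; fun_prop

lemma G_zero (m r : ℤ) (n : ℕ) : Gfun m r 0 n = 0 := by
  unfold Gfun; norm_num

lemma G_bound (m r : ℤ) (hm : 0 < m) (h0 : 0 < r) (hrm : r < m) (t : ℝ) (ht : 0 ≤ t) (n : ℕ) :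
    |Gfun m r t n| ≤ (4*(r:ℝ)*((m:ℝ)-(r:ℝ)) + 256*(m:ℝ)^4) / ((n:ℝ)+1)^2 := by
  have hm1 : (1:ℝ) ≤ (m:ℝ) := by exact_mod_cast hm
  have hr1 : (1:ℝ) ≤ (r:ℝ) := by exact_mod_cast h0
  have hrm1 : (r:ℝ) ≤ (m:ℝ) := by exact_mod_cast hrm.le
  have hmne : (m:ℝ) ≠ 0 := by linarith
  have hn0 : (0:ℝ) ≤ (n:ℝ) := Nat.cast_nonneg n
  unfold Gfun
  set α : ℝ := π*t/(2*(m:ℝ)) with hα_def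
  have hα : 0 ≤ α := by
    rw [hα_def]; apply div_nonneg (mul_nonneg Real.pi_pos.le ht); linarith
  set x : ℝ := 2*(m:ℝ)*n + r with hx_def
  set y : ℝ := 2*(m:ℝ)*n + (2*(m:ℝ) - r) with hy_def
  set z : ℝ := 2*(m:ℝ)*((n+1:ℕ):ℝ) + r with hz_def
  set d : ℝ := 1 - (r:ℝ)/(m:ℝ) with hd_def
  have hd0 : 0 ≤ d := by
    rw [hd_def]
    have : (r:ℝ)/(m:ℝ) ≤ 1 := by
      rw [div_le_one (by linarith)]; linarith
    linarith
  have hd1 : d ≤ 1 := by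
    rw [hd_def]
    have : 0 ≤ (r:ℝ)/(m:ℝ) := by positivity
    linarith
  have hzz : ((n+1:ℕ):ℝ) = (n:ℝ)+1 := by push_cast; ring
  have hx1 : (n:ℝ)+1 ≤ x := by
    rw [hx_def]
    nlinarith [mul_nonneg (sub_nonneg.mpr hm1) hn0]
  have hx0 : 0 ≤ x := by linarith
  have hxy : x ≤ y := by rw [hx_def, hy_def]; linarith
  have hxz : x ≤ z := by rw [hx_def, hz_def, hzz]; nlinarith
  have hU0 : 0 ≤ y^2 - x^2 := by nlinarith
  have hV0 : 0 ≤ z^2 - x^2 := by nlinarith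
  have hδ : (0:ℝ) ≤ 4*(r:ℝ)*((m:ℝ)-(r:ℝ)) := by nlinarith
  have hId : d*(z^2 - x^2) - (y^2 - x^2) = 4*(r:ℝ)*((m:ℝ)-(r:ℝ)) := by
    rw [hd_def, hx_def, hy_def, hz_def, hzz]
    field_simp
    ring
  have hUV : α*(y^2-x^2) ≤ d*(α*(z^2-x^2)) := by
    have h1 : y^2 - x^2 ≤ d*(z^2-x^2) := by linarith
    have h2 := mul_le_mul_of_nonneg_left h1 hα
    linarith [h2]
  have hf1 : Real.exp (-(α*y^2)) = Real.exp (-(α*x^2)) * Real.exp (-(α*(y^2-x^2))) := by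
    rw [← Real.exp_add]; ring_nf
  have hf2 : Real.exp (-(α*z^2)) = Real.exp (-(α*x^2)) * Real.exp (-(α*(z^2-x^2))) := by
    rw [← Real.exp_add]; ring_nf
  have hG : (Real.exp (-(α*x^2)) - Real.exp (-(α*y^2)))
      - d * (Real.exp (-(α*x^2)) - Real.exp (-(α*z^2)))
      = Real.exp (-(α*x^2)) * ((1 - Real.exp (-(α*(y^2-x^2))))
        - d*(1 - Real.exp (-(α*(z^2-x^2))))) := by
    rw [hf1, hf2]; ring
  rw [hG, abs_mul, _root_.abs_of_nonneg (Real.exp_nonneg _)]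
  have hΔ := delta_bound d (α*(y^2-x^2)) (α*(z^2-x^2)) hd0 hd1
    (mul_nonneg hα hV0) (mul_nonneg hα hU0) hUV
  have hαδ : d*(α*(z^2-x^2)) - α*(y^2-x^2) = α*(4*(r:ℝ)*((m:ℝ)-(r:ℝ))) := by
    linear_combination α * hId
  rw [hαδ] at hΔ
  have step1 : Real.exp (-(α*x^2)) * |(1 - Real.exp (-(α*(y^2-x^2))))
      - d*(1 - Real.exp (-(α*(z^2-x^2))))|
      ≤ Real.exp (-(α*((n:ℝ)+1)^2)) * (α*(4*(r:ℝ)*((m:ℝ)-(r:ℝ))) + (α*(z^2-x^2))^2) := by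
    have e1 : Real.exp (-(α*x^2)) ≤ Real.exp (-(α*((n:ℝ)+1)^2)) := by
      apply Real.exp_le_exp.mpr
      have := mul_le_mul_of_nonneg_left (pow_le_pow_left₀ (by positivity) hx1 2) hα
      linarith
    calc Real.exp (-(α*x^2)) * |(1 - Real.exp (-(α*(y^2-x^2))))
        - d*(1 - Real.exp (-(α*(z^2-x^2))))|
        ≤ Real.exp (-(α*x^2)) * (α*(4*(r:ℝ)*((m:ℝ)-(r:ℝ))) + (α*(z^2-x^2))^2) :=
          mul_le_mul_of_nonneg_left hΔ (Real.exp_nonneg _)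
      _ ≤ Real.exp (-(α*((n:ℝ)+1)^2)) * (α*(4*(r:ℝ)*((m:ℝ)-(r:ℝ))) + (α*(z^2-x^2))^2) := by
          apply mul_le_mul_of_nonneg_right e1
          positivity
  refine le_trans step1 ?_
  have b1 : Real.exp (-(α*((n:ℝ)+1)^2)) * (α*(4*(r:ℝ)*((m:ℝ)-(r:ℝ))))
      ≤ (4*(r:ℝ)*((m:ℝ)-(r:ℝ)))/((n:ℝ)+1)^2 := by
    have h := exp_decay1 α (((n:ℝ)+1)^2) hα (by positivity)
    calc Real.exp (-(α*((n:ℝ)+1)^2)) * (α*(4*(r:ℝ)*((m:ℝ)-(r:ℝ))))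
        = (α * Real.exp (-(α*((n:ℝ)+1)^2))) * (4*(r:ℝ)*((m:ℝ)-(r:ℝ))) := by ring
      _ ≤ (1/((n:ℝ)+1)^2) * (4*(r:ℝ)*((m:ℝ)-(r:ℝ))) := mul_le_mul_of_nonneg_right h hδ
      _ = (4*(r:ℝ)*((m:ℝ)-(r:ℝ)))/((n:ℝ)+1)^2 := by ring
  have hVle : z^2 - x^2 ≤ 8*(m:ℝ)^2*((n:ℝ)+1) := by
    rw [hx_def, hz_def, hzz]
    nlinarith [mul_nonneg (mul_nonneg (by linarith : (0:ℝ) ≤ (m:ℝ)) (by linarith : (0:ℝ) ≤ (m:ℝ)-(r:ℝ))) hn0]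
  have hV2 : (z^2-x^2)^2 ≤ 64*(m:ℝ)^4*((n:ℝ)+1)^2 := by
    calc (z^2-x^2)^2 ≤ (8*(m:ℝ)^2*((n:ℝ)+1))^2 := pow_le_pow_left₀ hV0 hVle 2
      _ = 64*(m:ℝ)^4*((n:ℝ)+1)^2 := by ring
  have b2 : Real.exp (-(α*((n:ℝ)+1)^2)) * (α*(z^2-x^2))^2
      ≤ (256*(m:ℝ)^4)/((n:ℝ)+1)^2 := by
    have h2 := exp_decay2 α (((n:ℝ)+1)^2) hα (by positivity)
    calc Real.exp (-(α*((n:ℝ)+1)^2)) * (α*(z^2-x^2))^2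
        = (α^2 * Real.exp (-(α*((n:ℝ)+1)^2))) * (z^2-x^2)^2 := by ring
      _ ≤ (4/(((n:ℝ)+1)^2)^2) * (64*(m:ℝ)^4*((n:ℝ)+1)^2) :=
          mul_le_mul h2 hV2 (sq_nonneg _) (by positivity)
      _ = (256*(m:ℝ)^4)/((n:ℝ)+1)^2 := by field_simp; ring
  calc Real.exp (-(α*((n:ℝ)+1)^2)) * (α*(4*(r:ℝ)*((m:ℝ)-(r:ℝ))) + (α*(z^2-x^2))^2)
      = Real.exp (-(α*((n:ℝ)+1)^2)) * (α*(4*(r:ℝ)*((m:ℝ)-(r:ℝ))))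
        + Real.exp (-(α*((n:ℝ)+1)^2)) * (α*(z^2-x^2))^2 := by ring
    _ ≤ (4*(r:ℝ)*((m:ℝ)-(r:ℝ)))/((n:ℝ)+1)^2 + (256*(m:ℝ)^4)/((n:ℝ)+1)^2 := add_le_add b1 b2
    _ = (4*(r:ℝ)*((m:ℝ)-(r:ℝ)) + 256*(m:ℝ)^4) / ((n:ℝ)+1)^2 := by rw [← add_div]

lemma tendsto_series (m r : ℤ) (hm : 0 < m) (h0 : 0 < r) (hrm : r < m) :
    Tendsto (fun t : ℝ => (∑' n : ℕ, (Real.exp (-(π*t/(2*(m:ℝ)) * (2*(m:ℝ)*n + r)^2))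
      - Real.exp (-(π*t/(2*(m:ℝ)) * (2*(m:ℝ)*n + (2*(m:ℝ) - r))^2)))))
      (𝓝[>] (0:ℝ)) (𝓝 (1 - (r:ℝ)/(m:ℝ))) := by
  have hm1 : (1:ℝ) ≤ (m:ℝ) := by exact_mod_cast hm
  have hr1 : (1:ℝ) ≤ (r:ℝ) := by exact_mod_cast h0
  have hrm1 : (r:ℝ) ≤ (m:ℝ) := by exact_mod_cast hrm.le
  have Ksum : Summable (fun n : ℕ => (4*(r:ℝ)*((m:ℝ)-(r:ℝ)) + 256*(m:ℝ)^4) / ((n:ℝ)+1)^2) := by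
    have h1 : Summable (fun n : ℕ => 1/((n:ℝ))^2) :=
      Real.summable_one_div_nat_pow.mpr one_lt_two
    have h2 : Summable (fun n : ℕ => 1/(((n+1:ℕ)):ℝ)^2) := (summable_nat_add_iff 1).mpr h1
    apply (h2.mul_left (4*(r:ℝ)*((m:ℝ)-(r:ℝ)) + 256*(m:ℝ)^4)).congr
    intro n
    push_cast
    ring
  have hHcont : ContinuousOn (fun t => ∑' n, Gfun m r t n) (Set.Ici (0:ℝ)) := by
    apply continuousOn_tsum (fun n => (G_cont m r n).continuousOn) Ksum
    intro n t ht
    rw [Real.norm_eq_abs]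
    exact G_bound m r hm h0 hrm t ht n
  have hH0 : (∑' n, Gfun m r 0 n) = 0 := by
    calc (∑' n, Gfun m r 0 n) = ∑' _ : ℕ, (0:ℝ) := tsum_congr (G_zero m r)
      _ = 0 := tsum_zero
  have tendstoH : Tendsto (fun t => ∑' n, Gfun m r t n) (𝓝[>] (0:ℝ)) (𝓝 0) := by
    have h := (hHcont 0 Set.self_mem_Ici).tendsto
    rw [hH0] at h
    exact h.mono_left (nhdsWithin_mono 0 Set.Ioi_subset_Ici_self)
  have tendstoP : Tendsto (fun t : ℝ => (1 - (r:ℝ)/(m:ℝ)) *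
      Real.exp (-(π*t/(2*(m:ℝ)) * (2*(m:ℝ)*((0:ℕ):ℝ) + r)^2))) (𝓝[>] (0:ℝ))
      (𝓝 (1 - (r:ℝ)/(m:ℝ))) := by
    have hcont : Continuous (fun t : ℝ => (1 - (r:ℝ)/(m:ℝ)) *
        Real.exp (-(π*t/(2*(m:ℝ)) * (2*(m:ℝ)*((0:ℕ):ℝ) + r)^2))) := by fun_prop
    have h := hcont.tendsto 0
    have hval : (1 - (r:ℝ)/(m:ℝ)) *
        Real.exp (-(π*(0:ℝ)/(2*(m:ℝ)) * (2*(m:ℝ)*((0:ℕ):ℝ) + r)^2)) = 1 - (r:ℝ)/(m:ℝ) := by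
      norm_num
    rw [hval] at h
    exact h.mono_left nhdsWithin_le_nhds
  have heq : ∀ t ∈ Set.Ioi (0:ℝ), (∑' n, Gfun m r t n) + (1 - (r:ℝ)/(m:ℝ)) *
      Real.exp (-(π*t/(2*(m:ℝ)) * (2*(m:ℝ)*((0:ℕ):ℝ) + r)^2))
      = ∑' n : ℕ, (Real.exp (-(π*t/(2*(m:ℝ)) * (2*(m:ℝ)*n + r)^2))
        - Real.exp (-(π*t/(2*(m:ℝ)) * (2*(m:ℝ)*n + (2*(m:ℝ) - r))^2))) := by
    intro t ht
    have ht' : (0:ℝ) < t := ht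
    have hc : 0 < π*t/(2*(m:ℝ)) := div_pos (mul_pos Real.pi_pos ht') (by linarith)
    set c : ℝ := π*t/(2*(m:ℝ)) with hc_def
    set p : ℕ → ℝ := fun n => Real.exp (-(c * (2*(m:ℝ)*n + r)^2)) with hp_def
    set q : ℕ → ℝ := fun n => Real.exp (-(c * (2*(m:ℝ)*n + (2*(m:ℝ) - r))^2)) with hq_def
    have hbase : ∀ (b : ℝ), 1 ≤ b → ∀ n : ℕ, (n:ℝ) ≤ (2*(m:ℝ)*n + b)^2 := by
      intro b hb n
      have hn : (0:ℝ) ≤ n := Nat.cast_nonneg n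
      have h1 : (0:ℝ) ≤ ((m:ℝ)-1)*n := mul_nonneg (by linarith) hn
      have h2 : (n:ℝ)+1 ≤ 2*(m:ℝ)*n + b := by nlinarith
      have h3 := pow_le_pow_left₀ (by positivity : (0:ℝ) ≤ (n:ℝ)+1) h2 2
      nlinarith [sq_nonneg ((n:ℝ))]
    have hp : Summable p := summable_exp_neg_mul c hc _ (hbase _ hr1)
    have hq : Summable q := summable_exp_neg_mul c hc _ (hbase _ (by linarith))
    have hp1 : Summable (fun n : ℕ => p (n+1)) := (summable_nat_add_iff 1).mpr hp
    have htel : HasSum (fun n : ℕ => p n - p (n+1)) (p 0) := by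
      rw [(hp.sub hp1).hasSum_iff_tendsto_nat]
      have hlim : Tendsto (fun N : ℕ => p 0 - p N) atTop (𝓝 (p 0 - 0)) :=
        tendsto_const_nhds.sub hp.tendsto_atTop_zero
      rw [sub_zero] at hlim
      exact hlim.congr (fun N => (Finset.sum_range_sub' p N).symm)
    have hGn : ∀ n : ℕ, Gfun m r t n = (p n - q n) - (1 - (r:ℝ)/(m:ℝ)) * (p n - p (n+1)) := by
      intro n
      simp only [Gfun, hp_def, hq_def, hc_def]
    have hGsum : (∑' n, Gfun m r t n)
        = (∑' n : ℕ, (p n - q n)) - (1 - (r:ℝ)/(m:ℝ)) * p 0 := by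
      rw [tsum_congr hGn, (hp.sub hq).tsum_sub (htel.summable.mul_left _), tsum_mul_left,
        htel.tsum_eq]
    rw [hGsum]
    have hp0 : Real.exp (-(c * (2*(m:ℝ)*((0:ℕ):ℝ) + r)^2)) = p 0 := by
      simp only [hp_def]
    rw [hp0, sub_add_cancel]
  have final := (tendstoH.add tendstoP).congr'
    (Filter.eventuallyEq_of_mem self_mem_nhdsWithin heq)
  rw [zero_add] at final
  exact final

lemma falseTheta_neg (m r : ℤ) (τ : ℂ) : falseTheta m r τ = - falseTheta m (2*m - r) τ := by
  unfold falseTheta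
  rw [← tsum_neg]
  rw [← (Equiv.neg ℤ).tsum_eq (f := fun k : ℤ => -(if k % (2*m) = (2*m - r) % (2*m) then
    (k.sign : ℂ) * Complex.exp (2*(π:ℂ)*I*τ*((k:ℂ)^2/(4*(m:ℂ)))) else 0))]
  apply tsum_congr
  intro k
  simp only [Equiv.neg_apply]
  by_cases hc : k % (2*m) = r % (2*m)
  · have hc' : (-k) % (2*m) = (2*m - r) % (2*m) := by
      have h1 : Int.ModEq (2*m) k r := hc
      have h2 : Int.ModEq (2*m) (-k) (-r) := h1.neg
      have h3 : Int.ModEq (2*m) (-r) (2*m - r) := Int.modEq_iff_dvd.mpr ⟨1, by ring⟩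
      exact h2.trans h3
    rw [if_pos hc, if_pos hc']
    have harg : ((-k : ℤ) : ℂ) = -((k : ℤ) : ℂ) := by push_cast; ring
    rw [harg, neg_sq, Int.sign_neg]
    push_cast
    ring
  · have hc' : ¬((-k) % (2*m) = (2*m - r) % (2*m)) := by
      intro hcon
      apply hc
      have h1 : Int.ModEq (2*m) (-k) (2*m - r) := hcon
      have h2 : Int.ModEq (2*m) k (-(2*m - r)) := by
        have := h1.neg
        rwa [neg_neg] at this
      have h3 : Int.ModEq (2*m) (-(2*m - r)) r := Int.modEq_iff_dvd.mpr ⟨1, by ring⟩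
      exact h2.trans h3
    rw [if_neg hc, if_neg hc']
    simp

lemma main_tendsto (m r : ℤ) (hm : 0 < m) (h0 : 0 < r) (hrm : r < m) :
    Tendsto (fun t : ℝ => falseTheta m r ((t:ℂ) * I)) (𝓝[>] (0:ℝ))
      (𝓝 (((1 - (r:ℝ)/(m:ℝ)) : ℝ) : ℂ)) := by
  have hlim := tendsto_series m r hm h0 hrm
  have hC := (Complex.continuous_ofReal.tendsto _).comp hlim
  exact hC.congr' (Filter.eventuallyEq_of_mem self_mem_nhdsWithin
    (fun t ht => (falseTheta_repr m r hm h0 (by omega) t ht).symm))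

/-- for `m > 0` and `0 ≤ r < 2m` with `r ∉ {0, m}`, the radial limit
`lim_{t→0⁺} θ̃¹_{m,r}(it)` exists and is finite. -/
theorem stmt_17 (m r : ℤ) (hm : 0 < m) (hr0 : 0 ≤ r) (hr2m : r < 2 * m)
    (hne0 : r ≠ 0) (hnem : r ≠ m) :
    ∃ L : ℂ, Tendsto (fun t : ℝ => falseTheta m r ((t : ℂ) * I)) (𝓝[>] 0) (𝓝 L) := by
  rcases lt_trichotomy r m with h | h | h
  · exact ⟨_, main_tendsto m r hm (hr0.lt_of_ne (Ne.symm hne0)) h⟩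
  · exact absurd h hnem
  · have hmain := main_tendsto m (2*m - r) hm (by omega) (by omega)
    refine ⟨-(((1 - ((2*m - r : ℤ):ℝ)/(m:ℝ)) : ℝ) : ℂ), ?_⟩
    have heq : (fun t : ℝ => falseTheta m r ((t:ℂ)*I))
        = (fun t : ℝ => - falseTheta m (2*m - r) ((t:ℂ)*I)) :=
      funext (fun t => falseTheta_neg m r _)
    rw [heq]
    exact hmain.neg
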